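/- Let γ be a translation-invariant Gibbsian specification on Ω = E^ℤ with associated potential φ_γ, let μ ∈ G_S(γ), and let τ be any S-invariant Borel probability measure on Ω. Then the specific relative entropy h(τ|μ) = lim_{n→∞} (1/n) H_n(τ|μ) exists and equals P(φ_γ) − h(τ) − ∫ φ_γ dτ, where h(τ) is the Kolmogorov–Sinai entropy of (τ, S) and P(φ_γ) is the topological pressure of φ_γ. -/

import Mathlib

open Filter Topology MeasureTheory

namespace GP

/-- The configuration space `Ω = E^ℤ`. -/
abbrev Conf (E : Type*) := ℤ → E

variable {E : Type*}

/-- The shift by `i`: `(shiftZ i ω) k = ω (k + i)`.  The left shift `S` is `shiftZ 1`. -/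
def shiftZ (i : ℤ) (ω : Conf E) : Conf E := fun k => ω (k + i)

/-- The cylinder set determined by a word `w ∈ E^n` (placed on coordinates `0,…,n-1`). -/
def cylW {n : ℕ} (w : Fin n → E) : Set (Conf E) := {ω | ∀ j : Fin n, ω ((j : ℕ) : ℤ) = w j}

/-- The cylinder set `[ω_0^{n-1}]`. -/
def cylPt (ω : Conf E) (n : ℕ) : Set (Conf E) :=
  {ω' | ∀ j : ℕ, j < n → ω' (j : ℤ) = ω (j : ℤ)}

/-- Birkhoff sum `S_n φ = ∑_{k=0}^{n-1} φ ∘ S^k`. -/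
def birk (φ : Conf E → ℝ) (n : ℕ) (ω : Conf E) : ℝ :=
  ∑ k ∈ Finset.range n, φ (shiftZ (k : ℤ) ω)

/-- Topological pressure of `φ` on the full shift:
`P(φ) = lim_n (1/n) log ∑_{w ∈ E^n} sup_{ω ∈ [w]} exp (S_n φ (ω))`
(the limit exists; we use `limsup` as the defining expression). -/
noncomputable def press [Fintype E] (φ : Conf E → ℝ) : ℝ :=
  Filter.limsup (fun n : ℕ =>
    Real.log (∑ w : Fin n → E, sSup ((fun ω => Real.exp (birk φ n ω)) '' cylW w)) / n) atTop

/-- Kolmogorov–Sinai entropy of a shift-invariant measure on the full shift,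
computed along the canonical generating partition into cylinders
(the limit exists; we use `limsup` as the defining expression). -/
noncomputable def ent [Fintype E] [MeasurableSpace E] (μ : Measure (Conf E)) : ℝ :=
  Filter.limsup (fun n : ℕ =>
    (- ∑ w : Fin n → E, ((μ (cylW w)).toReal * Real.log (μ (cylW w)).toReal)) / n) atTop

/-- Shift invariance of a measure. -/
def ShiftInv [MeasurableSpace E] (μ : Measure (Conf E)) : Prop :=
  Measure.map (shiftZ 1) μ = μ

/-- `μ` is an equilibrium state for `φ`: `μ` is a shift-invariant Borel probability
measure with `h(μ) + ∫ φ dμ = P(φ)`. -/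
def IsEquilibrium [Fintype E] [MeasurableSpace E] (φ : Conf E → ℝ)
    (μ : Measure (Conf E)) : Prop :=
  IsProbabilityMeasure μ ∧ ShiftInv μ ∧ ent μ + ∫ ω, φ ω ∂μ = press φ

/-- `ω^c`: the configuration equal to `c` at site `0` and to `ω` elsewhere. -/
def upd0 (ω : Conf E) (c : E) : Conf E := Function.update ω 0 c

/-- Partial sums `ρ_n(ξ,η) = ∑_{i=-n}^{n} (φ(S^i ξ) - φ(S^i η))`. -/
noncomputable def rhoN (φ : Conf E → ℝ) (ξ η : Conf E) (n : ℕ) : ℝ :=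
  ∑ i ∈ Finset.Icc (-(n : ℤ)) (n : ℤ), (φ (shiftZ i ξ) - φ (shiftZ i η))

/-- `φ` has the extensibility property: for all `a b ∈ E`, the functions
`ω ↦ ∑_{i=-n}^{n} (φ(S^i(ω^b)) - φ(S^i(ω^a)))` converge uniformly as `n → ∞`. -/
def Extensible (φ : Conf E → ℝ) : Prop :=
  ∀ a b : E, ∃ r : Conf E → ℝ,
    TendstoUniformly (fun n ω => rhoN φ (upd0 ω b) (upd0 ω a) n) r atTop

/-- The cocycle `ρ^φ(ξ,η) = lim_n ∑_{i=-n}^{n} (φ(S^i ξ) - φ(S^i η))`. -/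
noncomputable def rho (φ : Conf E → ℝ) (ξ η : Conf E) : ℝ :=
  limUnder atTop (rhoN φ ξ η)

/-- `ξ` and `η` differ in at most finitely many coordinates. -/
def FinDiff (ξ η : Conf E) : Prop := {k : ℤ | ξ k ≠ η k}.Finite

/-- `ovr Λ ξ ω` is the configuration `ξ_Λ ω_{ℤ∖Λ}`, equal to `ξ` on `Λ` and to `ω` off `Λ`. -/
def ovr (Λ : Finset ℤ) (ξ : {k // k ∈ Λ} → E) (ω : Conf E) : Conf E :=
  fun k => if h : k ∈ Λ then ξ ⟨k, h⟩ else ω k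

/-- `γ` is a specification: each `γ_Λ(·|ω_{Λ^c})` is a probability distribution on `E^Λ`,
and the family is consistent (`γ_Λ = γ_Λ ∘ γ_V` for `V ⊆ Λ`); here `γ Λ ω` denotes
`γ_Λ(ω_Λ | ω_{Λ^c})`. -/
def IsSpecification [Fintype E] (γ : Finset ℤ → Conf E → ℝ) : Prop :=
  (∀ (Λ : Finset ℤ) (ω : Conf E), 0 ≤ γ Λ ω) ∧
  (∀ (Λ : Finset ℤ) (ω : Conf E), ∑ ξ : {k // k ∈ Λ} → E, γ Λ (ovr Λ ξ ω) = 1) ∧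
  (∀ V Λ : Finset ℤ, V ⊆ Λ → ∀ ω : Conf E,
     γ Λ ω = (∑ η : {k // k ∈ V} → E, γ Λ (ovr V η ω)) * γ V ω)

/-- Non-nullness: `inf_ω γ_Λ(ω_Λ|ω_{Λ^c}) > 0` for every finite `Λ`. -/
def NonNull (γ : Finset ℤ → Conf E → ℝ) : Prop :=
  ∀ Λ : Finset ℤ, ∃ c > (0 : ℝ), ∀ ω : Conf E, c ≤ γ Λ ω

/-- Continuity (quasilocality): `ω ↦ γ_Λ(ω_Λ|ω_{Λ^c})` is continuous for every finite `Λ`. -/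
def ContSpec [TopologicalSpace E] (γ : Finset ℤ → Conf E → ℝ) : Prop :=
  ∀ Λ : Finset ℤ, Continuous (γ Λ)

/-- A Gibbsian specification: a non-null continuous specification. -/
def IsGibbsSpec [Fintype E] [TopologicalSpace E] (γ : Finset ℤ → Conf E → ℝ) : Prop :=
  IsSpecification γ ∧ NonNull γ ∧ ContSpec γ

/-- Translation invariance of a specification: `γ_{Λ+1} = γ_Λ ∘ S`. -/
def SpecTI (γ : Finset ℤ → Conf E → ℝ) : Prop :=
  ∀ (Λ : Finset ℤ) (ω : Conf E), γ (Λ.image (· + 1)) ω = γ Λ (shiftZ 1 ω)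

/-- `μ` is a DLR-Gibbs measure for the specification `γ`: `μ` is a Borel probability
measure satisfying the DLR equations `∫ γ_Λ(f|·) dμ = ∫ f dμ` for every finite `Λ`
and every continuous `f` (equivalently, each `γ_Λ` is a version of the conditional
probabilities of `μ`). -/
def IsDLRGibbs [Fintype E] [MeasurableSpace E] [TopologicalSpace E]
    (γ : Finset ℤ → Conf E → ℝ) (μ : Measure (Conf E)) : Prop :=
  IsProbabilityMeasure μ ∧
  ∀ (Λ : Finset ℤ) (f : Conf E → ℝ), Continuous f →
    ∫ ω, (∑ ξ : {k // k ∈ Λ} → E, γ Λ (ovr Λ ξ ω) * f (ovr Λ ξ ω)) ∂μ = ∫ ω, f ω ∂μ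

/-- The specification `γ^φ` associated with an extensible potential `φ`:
`γ^φ_Λ(ω_Λ|ω_{Λ^c}) = (∑_{ξ_Λ ∈ E^Λ} exp ρ^φ(ξ_Λ ω_{ℤ∖Λ}, ω))⁻¹`. -/
noncomputable def specOf [Fintype E] (φ : Conf E → ℝ) : Finset ℤ → Conf E → ℝ :=
  fun Λ ω => (∑ ξ : {k // k ∈ Λ} → E, Real.exp (rho φ (ovr Λ ξ ω) ω))⁻¹

/-- The configuration `𝐚_{-∞}^{-1} b ω_1^{∞}`: equal to `a` at all negative
coordinates, to `b` at coordinate `0`, and to `ω` at positive coordinates. -/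
def bca (a : E) (ω : Conf E) (b : E) : Conf E :=
  fun k => if k < 0 then a else if k = 0 then b else ω k

/-- The potential associated with a specification:
`φ_γ(ω) = log (γ_{{0}}(ω_0 | 𝐚_{-∞}^{-1} ω_1^{∞}) / γ_{{0}}(a | 𝐚_{-∞}^{-1} ω_1^{∞}))`. -/
noncomputable def phiOf (γ : Finset ℤ → Conf E → ℝ) (a : E) (ω : Conf E) : ℝ :=
  Real.log (γ ({0} : Finset ℤ) (bca a ω (ω 0)) / γ ({0} : Finset ℤ) (bca a ω a))

/-- `μ` is weak Bowen-Gibbs for `φ` with constant `P`. -/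
def WeakBowenGibbs [MeasurableSpace E] (μ : Measure (Conf E)) (φ : Conf E → ℝ)
    (P : ℝ) : Prop :=
  ∃ C : ℕ → ℝ, (∀ n, 0 < C n) ∧
    Tendsto (fun n : ℕ => Real.log (C n) / n) atTop (𝓝 0) ∧
    ∀ (n : ℕ) (ω : Conf E),
      (C n)⁻¹ ≤ (μ (cylPt ω n)).toReal / Real.exp (birk φ n ω - n * P) ∧
      (μ (cylPt ω n)).toReal / Real.exp (birk φ n ω - n * P) ≤ C n


/-- Finite-volume relative entropy
`H_n(τ|μ) = ∑_{a_0^n ∈ E^{n+1}} τ([a_0^n]) log (τ([a_0^n]) / μ([a_0^n]))`. -/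
noncomputable def relEntN [Fintype E] [MeasurableSpace E]
    (τ μ : Measure (Conf E)) (n : ℕ) : ℝ :=
  ∑ w : Fin (n + 1) → E,
    (τ (cylW w)).toReal * Real.log ((τ (cylW w)).toReal / (μ (cylW w)).toReal)

/-!
Telescoping the one-site kernels `γ_{{j}}` across the word `w` (each swap of one letter for `a`
costs `φ_γ ∘ S^j`, up to the variation of `log γ_{{0}}` at distance `j`) shows that
`γ_{[0,n)}(w | η) = γ_{[0,n)}(a^n | η) · exp S_n φ_γ(ω) · e^{o(n)}` for every `ω ∈ [w]`,
uniformly in `η`. Integrating against `μ` through the DLR equations gives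
`μ[w] = Z_n exp S_n φ_γ(ω) e^{o(n)}`, and normalisation forces `Z_n = e^{-n P(φ_γ) + o(n)}`:
`μ` is weak Bowen–Gibbs for `φ_γ`. Hence `log μ[ω_0^{n-1}] = S_n φ_γ(ω) - n P(φ_γ) + o(n)`
uniformly in `ω`, and integrating against `τ` turns `H_n(τ|μ)` into `n P(φ_γ) - n ∫ φ_γ dτ`
minus the entropy of `τ` on `(n+1)`-cylinders, whose growth rate is `h(τ)` by subadditivity.
-/

section Cylinders

@[simp] lemma shiftZ_apply (i : ℤ) (ω : Conf E) (k : ℤ) : shiftZ i ω k = ω (k + i) := rfl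

lemma shiftZ_shiftZ (i j : ℤ) (ω : Conf E) : shiftZ i (shiftZ j ω) = shiftZ (i + j) ω := by
  funext k
  simp [add_assoc]

@[simp] lemma shiftZ_zero (ω : Conf E) : shiftZ 0 ω = ω := by
  funext k
  simp

def wordOf (n : ℕ) (ω : Conf E) : Fin n → E := fun j => ω (j : ℕ)

lemma cylW_eq_preimage {n : ℕ} (w : Fin n → E) : cylW w = wordOf n ⁻¹' {w} := by
  ext ω
  simp [cylW, wordOf, funext_iff]

lemma mem_cylW_iff_wordOf_eq {n : ℕ} {w : Fin n → E} {ω : Conf E} :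
    ω ∈ cylW w ↔ wordOf n ω = w := by
  rw [cylW_eq_preimage]
  rfl

lemma mem_cylW_wordOf (n : ℕ) (ω : Conf E) : ω ∈ cylW (wordOf n ω) := fun _ => rfl

lemma cylPt_eq_cylW (ω : Conf E) (n : ℕ) : cylPt ω n = cylW (wordOf n ω) := by
  ext ω'
  exact ⟨fun h j => h j j.2, fun h j hj => h ⟨j, hj⟩⟩

lemma wordOf_add (m k : ℕ) (ω : Conf E) :
    wordOf (m + k) ω = Fin.append (wordOf m ω) (wordOf k (shiftZ m ω)) := by
  funext i
  refine Fin.addCases (fun j => ?_) (fun j => ?_) i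
  · simp [wordOf]
  · simp [wordOf, add_comm]

lemma cylW_append {m k : ℕ} (w : Fin m → E) (v : Fin k → E) :
    cylW (Fin.append w v) = cylW w ∩ shiftZ m ⁻¹' cylW v := by
  ext ω
  simp only [cylW_eq_preimage, Set.mem_preimage, Set.mem_singleton_iff, Set.mem_inter_iff,
    wordOf_add]
  constructor
  · intro h
    exact ⟨funext fun j => by simpa using congrFun h (Fin.castAdd k j),
      funext fun j => by simpa using congrFun h (Fin.natAdd m j)⟩
  · rintro ⟨rfl, rfl⟩
    rfl

def writeWord {n : ℕ} (w : Fin n → E) (η : Conf E) : Conf E :=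
  fun k => if h : 0 ≤ k ∧ k < n then w ⟨k.toNat, by omega⟩ else η k

lemma writeWord_mem_cylW {n : ℕ} (w : Fin n → E) (η : Conf E) : writeWord w η ∈ cylW w := by
  intro j
  simp [writeWord]

lemma cylW_nonempty [Nonempty E] {n : ℕ} (w : Fin n → E) : (cylW w).Nonempty :=
  ⟨_, writeWord_mem_cylW w fun _ => Classical.arbitrary E⟩

variable [TopologicalSpace E]

lemma continuous_shiftZ (i : ℤ) : Continuous (shiftZ (E := E) i) :=
  continuous_pi fun k => continuous_apply (k + i)

lemma continuous_wordOf (n : ℕ) : Continuous (wordOf (E := E) n) :=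
  continuous_pi fun _ => continuous_apply _

lemma continuous_writeWord {n : ℕ} (w : Fin n → E) : Continuous (writeWord w) := by
  refine continuous_pi fun k => ?_
  by_cases h : 0 ≤ k ∧ k < n
  · simpa [writeWord, h] using continuous_const
  · simpa [writeWord, h] using continuous_apply k

lemma continuous_bca (a : E) {b : Conf E → E} (hb : Continuous b) :
    Continuous fun ω => bca a ω (b ω) := by
  refine continuous_pi fun k => ?_
  by_cases h1 : k < 0
  · simpa [bca, h1] using continuous_const
  by_cases h2 : k = 0
  · simpa [bca, h1, h2] using hb
  · simpa [bca, h1, h2] using continuous_apply k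

lemma isClopen_cylW [DiscreteTopology E] {n : ℕ} (w : Fin n → E) : IsClopen (cylW w) := by
  rw [cylW_eq_preimage]
  exact (isClopen_discrete {w}).preimage (continuous_wordOf n)

end Cylinders

section Measurability

variable [MeasurableSpace E]

lemma measurable_shiftZ (i : ℤ) : Measurable (shiftZ (E := E) i) :=
  measurable_pi_lambda _ fun k => measurable_pi_apply (k + i)

lemma measurable_wordOf (n : ℕ) : Measurable (wordOf (E := E) n) :=
  measurable_pi_lambda _ fun _ => measurable_pi_apply _

lemma measurePreserving_shiftZ_natCast {τ : Measure (Conf E)} (hτ : ShiftInv τ) (n : ℕ) :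
    MeasurePreserving (shiftZ n) τ τ := by
  induction n with
  | zero =>
    simpa [show shiftZ (E := E) 0 = id from funext shiftZ_zero] using MeasurePreserving.id τ
  | succ n ih =>
    have : shiftZ ((n + 1 : ℕ) : ℤ) = shiftZ (E := E) n ∘ shiftZ 1 :=
      funext fun ω => by simp [shiftZ_shiftZ]
    rw [this]
    exact ih.comp ⟨measurable_shiftZ 1, hτ⟩

variable [MeasurableSingletonClass E]

lemma measurableSet_cylW {n : ℕ} (w : Fin n → E) : MeasurableSet (cylW w) := by
  rw [cylW_eq_preimage]
  exact measurable_wordOf n (measurableSet_singleton w)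

variable [Fintype E]

lemma sum_measure_inter_preimage_cylW (ν : Measure (Conf E)) (s : Set (Conf E))
    {f : Conf E → Conf E} (hf : Measurable f) (n : ℕ) :
    ∑ w : Fin n → E, ν (s ∩ f ⁻¹' cylW w) = ν s := by
  have hmeas : ∀ w : Fin n → E, MeasurableSet (wordOf n ∘ f ⁻¹' {w}) :=
    fun w => (measurable_wordOf n).comp hf (measurableSet_singleton w)
  have h := sum_measure_preimage_singleton (μ := ν.restrict s) Finset.univ fun w _ => hmeas w
  simp only [Finset.coe_univ, Set.preimage_univ, Measure.restrict_apply_univ] at h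
  rw [← h]
  refine Finset.sum_congr rfl fun w _ => ?_
  rw [Measure.restrict_apply (hmeas w), Set.inter_comm, cylW_eq_preimage, Set.preimage_comp]

lemma sum_toReal_measure_cylW (ν : Measure (Conf E)) [IsProbabilityMeasure ν] (n : ℕ) :
    ∑ w : Fin n → E, (ν (cylW w)).toReal = 1 := by
  have h := sum_measure_inter_preimage_cylW ν Set.univ measurable_id n
  simp only [Set.univ_inter, Set.preimage_id, measure_univ] at h
  rw [← ENNReal.toReal_sum fun w _ => measure_ne_top ν _, h, ENNReal.toReal_one]

lemma integrable_comp_wordOf (ν : Measure (Conf E)) [IsFiniteMeasure ν] {n : ℕ}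
    (f : (Fin n → E) → ℝ) : Integrable (fun ω => f (wordOf n ω)) ν :=
  (integrable_map_measure (measurable_of_finite f).aestronglyMeasurable
    (measurable_wordOf n).aemeasurable).mp Integrable.of_finite

lemma integral_comp_wordOf (ν : Measure (Conf E)) [IsFiniteMeasure ν] {n : ℕ}
    (f : (Fin n → E) → ℝ) :
    ∫ ω, f (wordOf n ω) ∂ν = ∑ w : Fin n → E, (ν (cylW w)).toReal * f w := by
  rw [← integral_map (measurable_wordOf n).aemeasurable
    (measurable_of_finite f).aestronglyMeasurable, integral_fintype Integrable.of_finite]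
  refine Finset.sum_congr rfl fun w _ => ?_
  rw [smul_eq_mul, measureReal_def, Measure.map_apply (measurable_wordOf n)
    (measurableSet_singleton w), cylW_eq_preimage]

end Measurability

lemma integrable_of_continuous [Finite E] [TopologicalSpace E] [DiscreteTopology E]
    [MeasurableSpace E] [MeasurableSingletonClass E] {g : Conf E → ℝ} (hg : Continuous g)
    (ν : Measure (Conf E)) [IsFiniteMeasure ν] : Integrable g ν :=
  hg.integrable_of_hasCompactSupport (HasCompactSupport.of_compactSpace g)

section Variation

def agreeSet (m : ℕ) : Set (Conf E × Conf E) := {p | ∀ k : ℤ, |k| ≤ m → p.1 k = p.2 k}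

noncomputable def variation (g : Conf E → ℝ) (m : ℕ) : ℝ :=
  sSup ((fun p : Conf E × Conf E => |g p.1 - g p.2|) '' agreeSet m)

lemma agreeSet_antitone : Antitone (agreeSet (E := E)) :=
  fun _ _ h _ hp k hk => hp k (hk.trans (by exact_mod_cast h))

lemma variation_nonneg (g : Conf E → ℝ) (m : ℕ) : 0 ≤ variation g m :=
  Real.sSup_nonneg <| by
    rintro _ ⟨p, -, rfl⟩
    exact abs_nonneg _

lemma variation_le {g : Conf E → ℝ} {m : ℕ} {ε : ℝ} (hε : 0 ≤ ε)
    (h : ∀ p ∈ agreeSet m, |g p.1 - g p.2| ≤ ε) : variation g m ≤ ε :=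
  Real.sSup_le (by rintro _ ⟨p, hp, rfl⟩; exact h p hp) hε

variable [Finite E] [TopologicalSpace E] [DiscreteTopology E] {g : Conf E → ℝ}

lemma isClosed_agreeSet (m : ℕ) : IsClosed (agreeSet (E := E) m) := by
  simp only [agreeSet, Set.ofPred_forall]
  exact isClosed_iInter fun k => isClosed_iInter fun _ =>
    isClosed_eq ((continuous_apply k).comp continuous_fst)
      ((continuous_apply k).comp continuous_snd)

lemma abs_sub_le_variation (hg : Continuous g) {m : ℕ} {ω ω' : Conf E}
    (h : ∀ k : ℤ, |k| ≤ m → ω k = ω' k) : |g ω - g ω'| ≤ variation g m :=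
  le_csSup ((isClosed_agreeSet m).isCompact.bddAbove_image (by fun_prop)) ⟨(ω, ω'), h, rfl⟩

lemma variation_antitone (hg : Continuous g) : Antitone (variation g) :=
  fun _ _ h => variation_le (variation_nonneg g _) fun _ hp =>
    abs_sub_le_variation hg (agreeSet_antitone h hp)

lemma tendsto_variation (hg : Continuous g) : Tendsto (variation g) atTop (𝓝 0) := by
  -- The closed sets `{p ∈ agreeSet M | ε ≤ |g p.1 - g p.2|}` decrease to the empty set,
  -- so by compactness one of them is already empty.
  have hsmall : ∀ ε > 0, ∃ M, ∀ p ∈ agreeSet M, |g p.1 - g p.2| < ε := by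
    intro ε hε
    by_contra! hbad
    let K : ℕ → Set (Conf E × Conf E) := fun M => agreeSet M ∩ {p | ε ≤ |g p.1 - g p.2|}
    have hK : ∀ M, IsClosed (K M) := fun M =>
      (isClosed_agreeSet M).inter (isClosed_le continuous_const (by fun_prop))
    obtain ⟨p, hp⟩ := IsCompact.nonempty_iInter_of_directed_nonempty_isCompact_isClosed K
      (Antitone.directed_ge fun _ _ h => Set.inter_subset_inter_left _ (agreeSet_antitone h))
      (fun M => hbad M) (fun M => (hK M).isCompact) hK
    simp only [Set.mem_iInter] at hp
    have hdiag : p.1 = p.2 := funext fun k => (hp k.natAbs).1 k (Int.abs_eq_natAbs k).le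
    have := (hp 0).2
    simp only [Set.mem_ofPred_eq, hdiag, sub_self, abs_zero] at this
    linarith
  rw [Metric.tendsto_atTop]
  intro ε hε
  obtain ⟨M, hM⟩ := hsmall (ε / 2) (half_pos hε)
  refine ⟨M, fun m hm => ?_⟩
  rw [Real.dist_eq, sub_zero, abs_of_nonneg (variation_nonneg g m)]
  exact ((variation_antitone hg hm).trans
    (variation_le (half_pos hε).le fun p hp => (hM p hp).le)).trans_lt (half_lt_self hε)

lemma tendsto_sum_variation_div (hg : Continuous g) :
    Tendsto (fun n : ℕ => (∑ j ∈ Finset.range n, variation g j) / n) atTop (𝓝 0) := by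
  simpa [div_eq_inv_mul] using (tendsto_variation hg).cesaro

end Variation

section Birkhoff

lemma birk_add (φ : Conf E → ℝ) (m k : ℕ) (ω : Conf E) :
    birk φ (m + k) ω = birk φ m ω + birk φ k (shiftZ m ω) := by
  simp only [birk, Finset.sum_range_add, shiftZ_shiftZ, Nat.cast_add, add_comm]

variable [TopologicalSpace E] {φ : Conf E → ℝ}

lemma continuous_birk (hφ : Continuous φ) (n : ℕ) : Continuous (birk φ n) :=
  continuous_finsetSum _ fun _ _ => hφ.comp (continuous_shiftZ _)

variable [Finite E] [DiscreteTopology E]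

lemma abs_birk_sub_le (hφ : Continuous φ) {n : ℕ} {w : Fin n → E} {x y : Conf E}
    (hx : x ∈ cylW w) (hy : y ∈ cylW w) :
    |birk φ n x - birk φ n y| ≤ 2 * ∑ j ∈ Finset.range n, variation φ j := by
  have hxy : ∀ k : ℤ, 0 ≤ k → k < n → x k = y k := fun k h0 h1 => by
    simpa [Int.toNat_of_nonneg h0] using
      (hx ⟨k.toNat, by omega⟩).trans (hy ⟨k.toNat, by omega⟩).symm
  -- `S^j x` and `S^j y` agree on `[-j, n-1-j]`.
  have hterm : ∀ j ∈ Finset.range n, |φ (shiftZ j x) - φ (shiftZ j y)| ≤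
      variation φ j + variation φ (n - 1 - j) := by
    intro j hj
    rw [Finset.mem_range] at hj
    have hagree : |φ (shiftZ j x) - φ (shiftZ j y)| ≤ variation φ (min j (n - 1 - j)) :=
      abs_sub_le_variation hφ fun k hk => by
        rw [abs_le] at hk
        exact hxy _ (by omega) (by omega)
    rcases min_choice j (n - 1 - j) with h | h <;> rw [h] at hagree <;>
      linarith [variation_nonneg φ j, variation_nonneg φ (n - 1 - j)]
  calc |birk φ n x - birk φ n y|
      = |∑ j ∈ Finset.range n, (φ (shiftZ j x) - φ (shiftZ j y))| := by
        rw [birk, birk, Finset.sum_sub_distrib]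
    _ ≤ ∑ j ∈ Finset.range n, (variation φ j + variation φ (n - 1 - j)) :=
        (Finset.abs_sum_le_sum_abs _ _).trans (Finset.sum_le_sum hterm)
    _ = 2 * ∑ j ∈ Finset.range n, variation φ j := by
        rw [Finset.sum_add_distrib, Finset.sum_range_reflect]
        ring

lemma integral_birk [MeasurableSpace E] [MeasurableSingletonClass E] (hφ : Continuous φ)
    {τ : Measure (Conf E)} [IsFiniteMeasure τ] (hτ : ShiftInv τ) (n : ℕ) :
    ∫ ω, birk φ n ω ∂τ = n * ∫ ω, φ ω ∂τ := by
  have hshift : ∀ j : ℕ, ∫ ω, φ (shiftZ j ω) ∂τ = ∫ ω, φ ω ∂τ := fun j => by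
    conv_rhs => rw [← (measurePreserving_shiftZ_natCast hτ j).map_eq]
    exact (integral_map (measurable_shiftZ _).aemeasurable hφ.aestronglyMeasurable).symm
  unfold birk
  rw [integral_finsetSum (f := fun (k : ℕ) ω => φ (shiftZ k ω)) _ fun j _ =>
    integrable_of_continuous (hφ.comp (continuous_shiftZ _)) τ]
  simp [hshift]

end Birkhoff

section Pressure

noncomputable def cylWeight (φ : Conf E → ℝ) {n : ℕ} (w : Fin n → E) : ℝ :=
  sSup ((fun ω => Real.exp (birk φ n ω)) '' cylW w)

noncomputable def logPartition [Fintype E] (φ : Conf E → ℝ) (n : ℕ) : ℝ :=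
  Real.log (∑ w : Fin n → E, cylWeight φ w)

lemma cylWeight_nonneg (φ : Conf E → ℝ) {n : ℕ} (w : Fin n → E) : 0 ≤ cylWeight φ w :=
  Real.sSup_nonneg <| by
    rintro _ ⟨_, -, rfl⟩
    exact (Real.exp_pos _).le

variable [TopologicalSpace E] [DiscreteTopology E] {φ : Conf E → ℝ}

section Finite

variable [Finite E]

lemma exp_birk_le_cylWeight (hφ : Continuous φ) {n : ℕ} {w : Fin n → E} {x : Conf E}
    (hx : x ∈ cylW w) : Real.exp (birk φ n x) ≤ cylWeight φ w :=
  le_csSup ((isClopen_cylW w).isClosed.isCompact.bddAbove_image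
    (Real.continuous_exp.comp (continuous_birk hφ n)).continuousOn) ⟨x, hx, rfl⟩

lemma cylWeight_pos (hφ : Continuous φ) {n : ℕ} {w : Fin n → E} {x : Conf E}
    (hx : x ∈ cylW w) : 0 < cylWeight φ w :=
  (Real.exp_pos _).trans_le (exp_birk_le_cylWeight hφ hx)

lemma abs_log_cylWeight_sub_birk_le (hφ : Continuous φ) {n : ℕ} {w : Fin n → E}
    {x : Conf E} (hx : x ∈ cylW w) :
    |Real.log (cylWeight φ w) - birk φ n x| ≤ 2 * ∑ j ∈ Finset.range n, variation φ j := by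
  have hle :
      cylWeight φ w ≤ Real.exp (birk φ n x + 2 * ∑ j ∈ Finset.range n, variation φ j) :=
    csSup_le ⟨_, x, hx, rfl⟩ <| by
      rintro _ ⟨y, hy, rfl⟩
      have := abs_birk_sub_le hφ hy hx
      exact Real.exp_le_exp.2 (by linarith [le_abs_self (birk φ n y - birk φ n x)])
  have hlow := Real.log_le_log (Real.exp_pos _) (exp_birk_le_cylWeight hφ hx)
  have hupp := Real.log_le_log (cylWeight_pos hφ hx) hle
  rw [Real.log_exp] at hlow hupp
  rw [abs_le]
  have hV := Finset.sum_nonneg fun j (_ : j ∈ Finset.range n) => variation_nonneg φ j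
  constructor <;> linarith

lemma cylWeight_append_le (hφ : Continuous φ) {m k : ℕ} (w : Fin m → E) (v : Fin k → E) :
    cylWeight φ (Fin.append w v) ≤ cylWeight φ w * cylWeight φ v := by
  refine Real.sSup_le ?_ (mul_nonneg (cylWeight_nonneg φ w) (cylWeight_nonneg φ v))
  rintro _ ⟨x, hx, rfl⟩
  rw [cylW_append] at hx
  dsimp only
  rw [birk_add, Real.exp_add]
  exact mul_le_mul (exp_birk_le_cylWeight hφ hx.1) (exp_birk_le_cylWeight hφ hx.2)
    (Real.exp_pos _).le (cylWeight_nonneg φ w)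

end Finite

variable [Fintype E] [Nonempty E]

lemma sum_cylWeight_pos (hφ : Continuous φ) (n : ℕ) : 0 < ∑ w : Fin n → E, cylWeight φ w :=
  Finset.sum_pos (fun w _ => cylWeight_pos hφ (cylW_nonempty w).choose_spec)
    Finset.univ_nonempty

lemma logPartition_subadditive (hφ : Continuous φ) : Subadditive (logPartition φ) := by
  intro m k
  rw [logPartition, logPartition, logPartition,
    ← Real.log_mul (sum_cylWeight_pos hφ m).ne' (sum_cylWeight_pos hφ k).ne']
  refine Real.log_le_log (sum_cylWeight_pos hφ _) ?_
  rw [Finset.sum_mul_sum, ← Fintype.sum_prod_type',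
    ← (Fin.appendEquiv m k).sum_comp fun u => cylWeight φ u]
  exact Finset.sum_le_sum fun p _ => cylWeight_append_le hφ p.1 p.2

lemma tendsto_logPartition_div (hφ : Continuous φ) :
    Tendsto (fun n : ℕ => logPartition φ n / n) atTop (𝓝 (press φ)) := by
  obtain ⟨B, hB⟩ := isCompact_univ.exists_bound_of_continuousOn hφ.continuousOn
  have hbdd : BddBelow (Set.range fun n : ℕ => logPartition φ n / n) := by
    refine ⟨-B, ?_⟩
    rintro _ ⟨n, rfl⟩
    let x : Conf E := fun _ => Classical.arbitrary E
    have hbirk : -(n * B) ≤ birk φ n x := by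
      have := Finset.sum_le_sum fun k (_ : k ∈ Finset.range n) =>
        neg_le_of_abs_le (hB (shiftZ k x) trivial)
      simpa [birk] using this
    have hlog : birk φ n x ≤ logPartition φ n :=
      (Real.le_log_iff_exp_le (sum_cylWeight_pos hφ n)).2 <|
        (exp_birk_le_cylWeight hφ (mem_cylW_wordOf n x)).trans
          (Finset.single_le_sum (fun w _ => cylWeight_nonneg φ w) (Finset.mem_univ _))
    rcases n.eq_zero_or_pos with rfl | hn
    · simpa using (norm_nonneg _).trans (hB x trivial)
    · rw [le_div_iff₀ (by exact_mod_cast hn)]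
      linarith
  have h := (logPartition_subadditive hφ).tendsto_lim hbdd
  rwa [show press φ = _ from h.limsup_eq]

end Pressure

section Entropy

lemma sub_le_mul_log_sub_mul_log {p r q : ℝ} (hp : 0 ≤ p) (hpr : p ≤ r) (hpq : p ≤ q) :
    p - r * q ≤ p * Real.log p - p * Real.log r - p * Real.log q := by
  rcases hp.eq_or_lt with rfl | hp
  · simpa using mul_nonneg hpr hpq
  have hr := hp.trans_le hpr
  have hq := hp.trans_le hpq
  have h := Real.log_le_sub_one_of_pos (div_pos (mul_pos hr hq) hp)
  rw [Real.log_div (mul_pos hr hq).ne' hp.ne', Real.log_mul hr.ne' hq.ne'] at h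
  have := mul_le_mul_of_nonneg_left h hp.le
  have hrq : p * (r * q / p - 1) = r * q - p := by field_simp
  rw [hrq] at this
  linarith

lemma sum_mul_log_marginals_le {α β : Type*} [Fintype α] [Fintype β] (p : α → β → ℝ)
    (hp : ∀ a b, 0 ≤ p a b) (hsum : ∑ a, ∑ b, p a b = 1) :
    ∑ a, (∑ b, p a b) * Real.log (∑ b, p a b)
      + ∑ b, (∑ a, p a b) * Real.log (∑ a, p a b) ≤ ∑ a, ∑ b, p a b * Real.log (p a b) := by
  set r := fun a => ∑ b, p a b with hr
  set q := fun b => ∑ a, p a b with hq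
  have hr1 : ∑ a, r a = 1 := hsum
  have hq1 : ∑ b, q b = 1 := by rw [hq, Finset.sum_comm]; exact hsum
  have hgibbs := Finset.sum_le_sum fun a (_ : a ∈ Finset.univ) => Finset.sum_le_sum
    fun b (_ : b ∈ Finset.univ) => sub_le_mul_log_sub_mul_log (hp a b)
      (Finset.single_le_sum (fun b' _ => hp a b') (Finset.mem_univ b))
      (Finset.single_le_sum (fun a' _ => hp a' b) (Finset.mem_univ a))
  have hrlog : ∑ a, r a * Real.log (r a) = ∑ a, ∑ b, p a b * Real.log (r a) := by
    simp only [hr, Finset.sum_mul]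
  have hqlog : ∑ b, q b * Real.log (q b) = ∑ a, ∑ b, p a b * Real.log (q b) := by
    rw [Finset.sum_comm]
    simp only [hq, Finset.sum_mul]
  have hprod : ∑ a, ∑ b, r a * q b = 1 := by
    simp only [← Finset.mul_sum, hr1, hq1, mul_one]
  simp only [Finset.sum_sub_distrib] at hgibbs
  linarith

noncomputable def cylEntropy [Fintype E] [MeasurableSpace E] (τ : Measure (Conf E)) (n : ℕ) :
    ℝ :=
  -∑ w : Fin n → E, (τ (cylW w)).toReal * Real.log (τ (cylW w)).toReal

noncomputable def cylRelEntropy [Fintype E] [MeasurableSpace E] (τ μ : Measure (Conf E))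
    (n : ℕ) : ℝ :=
  ∑ w : Fin n → E, (τ (cylW w)).toReal * Real.log ((τ (cylW w)).toReal / (μ (cylW w)).toReal)

variable [Fintype E] [MeasurableSpace E] {τ : Measure (Conf E)}

lemma cylEntropy_nonneg [IsProbabilityMeasure τ] (n : ℕ) : 0 ≤ cylEntropy τ n := by
  rw [cylEntropy, neg_nonneg]
  exact Finset.sum_nonpos fun w _ => Real.mul_log_nonpos ENNReal.toReal_nonneg
    (by simpa using ENNReal.toReal_mono ENNReal.one_ne_top (prob_le_one (s := cylW w)))

variable [MeasurableSingletonClass E]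

lemma sum_measure_cylW_append_right (τ : Measure (Conf E)) {m k : ℕ} (w : Fin m → E) :
    ∑ v : Fin k → E, τ (cylW (Fin.append w v)) = τ (cylW w) := by
  simp_rw [cylW_append]
  exact sum_measure_inter_preimage_cylW τ _ (measurable_shiftZ m) k

lemma sum_measure_cylW_append_left (hτ : ShiftInv τ) (m : ℕ) {k : ℕ} (v : Fin k → E) :
    ∑ w : Fin m → E, τ (cylW (Fin.append w v)) = τ (cylW v) := by
  simp_rw [cylW_append, Set.inter_comm (cylW _)]
  refine (sum_measure_inter_preimage_cylW τ _ measurable_id m).trans ?_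
  exact (measurePreserving_shiftZ_natCast hτ m).measure_preimage
    (measurableSet_cylW v).nullMeasurableSet

lemma cylEntropy_subadditive [IsProbabilityMeasure τ] (hτ : ShiftInv τ) :
    Subadditive (cylEntropy τ) := by
  intro m k
  let p : (Fin m → E) → (Fin k → E) → ℝ := fun w v => (τ (cylW (Fin.append w v))).toReal
  have hright : ∀ w, ∑ v, p w v = (τ (cylW w)).toReal := fun w => by
    rw [← ENNReal.toReal_sum fun v _ => measure_ne_top τ _, sum_measure_cylW_append_right]
  have hleft : ∀ v, ∑ w, p w v = (τ (cylW v)).toReal := fun v => by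
    rw [← ENNReal.toReal_sum fun w _ => measure_ne_top τ _, sum_measure_cylW_append_left hτ]
  have hjoint := sum_mul_log_marginals_le p (fun _ _ => ENNReal.toReal_nonneg)
    (by simp_rw [hright]; exact sum_toReal_measure_cylW τ m)
  simp only [hright, hleft] at hjoint
  have hsplit : cylEntropy τ (m + k) = -∑ w, ∑ v, p w v * Real.log (p w v) := by
    rw [cylEntropy, ← (Fin.appendEquiv m k).sum_comp, Fintype.sum_prod_type]
    rfl
  rw [hsplit, cylEntropy, cylEntropy]
  linarith

lemma tendsto_cylEntropy_div [IsProbabilityMeasure τ] (hτ : ShiftInv τ) :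
    Tendsto (fun n : ℕ => cylEntropy τ n / n) atTop (𝓝 (ent τ)) := by
  have h := (cylEntropy_subadditive hτ).tendsto_lim ⟨0, by
    rintro _ ⟨n, rfl⟩
    exact div_nonneg (cylEntropy_nonneg n) n.cast_nonneg⟩
  rwa [show ent τ = _ from h.limsup_eq]

end Entropy

section LogComparison

lemma abs_log_sub_log_le_iff {x y δ : ℝ} (hx : 0 < x) (hy : 0 < y) :
    |Real.log x - Real.log y| ≤ δ ↔ x ≤ Real.exp δ * y ∧ y ≤ Real.exp δ * x := by
  rw [abs_sub_le_iff, sub_le_iff_le_add, sub_le_iff_le_add, Real.log_le_iff_le_exp hx,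
    Real.log_le_iff_le_exp hy, Real.exp_add, Real.exp_add, Real.exp_log hx, Real.exp_log hy]

lemma abs_log_sum_sub_log_sum_le {ι : Type*} [Fintype ι] [Nonempty ι] {x y : ι → ℝ} {δ : ℝ}
    (hx : ∀ i, 0 < x i) (hy : ∀ i, 0 < y i)
    (h : ∀ i, |Real.log (x i) - Real.log (y i)| ≤ δ) :
    |Real.log (∑ i, x i) - Real.log (∑ i, y i)| ≤ δ := by
  simp_rw [abs_log_sub_log_le_iff (hx _) (hy _)] at h
  rw [abs_log_sub_log_le_iff (Finset.sum_pos (fun i _ => hx i) Finset.univ_nonempty)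
    (Finset.sum_pos (fun i _ => hy i) Finset.univ_nonempty), Finset.mul_sum, Finset.mul_sum]
  exact ⟨Finset.sum_le_sum fun i _ => (h i).1, Finset.sum_le_sum fun i _ => (h i).2⟩

variable {α : Type*} [MeasurableSpace α] {μ : Measure α} [NeZero μ] {f g : α → ℝ}

lemma integral_pos_of_forall_pos (hfi : Integrable f μ) (hf : ∀ x, 0 < f x) :
    0 < ∫ x, f x ∂μ := by
  rw [integral_pos_iff_support_of_nonneg (fun x => (hf x).le) hfi,
    Function.support_eq_univ fun x => (hf x).ne']
  exact Measure.measure_univ_pos.2 (NeZero.ne μ)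

lemma abs_log_integral_sub_log_integral_le {δ : ℝ} (hfi : Integrable f μ)
    (hgi : Integrable g μ) (hf : ∀ x, 0 < f x) (hg : ∀ x, 0 < g x)
    (h : ∀ x, |Real.log (f x) - Real.log (g x)| ≤ δ) :
    |Real.log (∫ x, f x ∂μ) - Real.log (∫ x, g x ∂μ)| ≤ δ := by
  simp_rw [abs_log_sub_log_le_iff (hf _) (hg _)] at h
  rw [abs_log_sub_log_le_iff (integral_pos_of_forall_pos hfi hf)
    (integral_pos_of_forall_pos hgi hg), ← integral_const_mul, ← integral_const_mul]
  exact ⟨integral_mono hfi (hgi.const_mul _) fun x => (h x).1,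
    integral_mono hgi (hfi.const_mul _) fun x => (h x).2⟩

end LogComparison

section WeakBowenGibbs

lemma weakBowenGibbs_iff [MeasurableSpace E] {μ : Measure (Conf E)} {φ : Conf E → ℝ}
    {P : ℝ} :
    WeakBowenGibbs μ φ P ↔ ∃ K : ℕ → ℝ, Tendsto (fun n : ℕ => K n / n) atTop (𝓝 0) ∧
      ∀ n ω, 0 < (μ (cylPt ω n)).toReal ∧
        |Real.log (μ (cylPt ω n)).toReal - (birk φ n ω - n * P)| ≤ K n := by
  constructor
  · rintro ⟨C, hCpos, hC, hbound⟩
    refine ⟨fun n => Real.log (C n), hC, fun n ω => ?_⟩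
    obtain ⟨hlow, hupp⟩ := hbound n ω
    have hratio := (inv_pos.2 (hCpos n)).trans_le hlow
    have hpos := (div_pos_iff_of_pos_right (Real.exp_pos _)).1 hratio
    have hl := Real.log_le_log (inv_pos.2 (hCpos n)) hlow
    have hu := Real.log_le_log hratio hupp
    rw [Real.log_div hpos.ne' (Real.exp_pos _).ne', Real.log_exp] at hl hu
    rw [Real.log_inv] at hl
    exact ⟨hpos, abs_le.2 ⟨by linarith, hu⟩⟩
  · rintro ⟨K, hK, hbound⟩
    refine ⟨fun n => Real.exp (K n), fun n => Real.exp_pos _, by simpa using hK, fun n ω => ?_⟩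
    obtain ⟨hpos, habs⟩ := hbound n ω
    rw [abs_le] at habs
    rw [← Real.exp_log hpos, ← Real.exp_sub, ← Real.exp_neg]
    exact ⟨Real.exp_le_exp.2 (by linarith), Real.exp_le_exp.2 (by linarith)⟩

variable [Fintype E] [Nonempty E] [TopologicalSpace E] [DiscreteTopology E] [MeasurableSpace E]
  [MeasurableSingletonClass E] {φ : Conf E → ℝ}

lemma abs_add_logPartition_le (hφ : Continuous φ) {μ : Measure (Conf E)}
    [IsProbabilityMeasure μ] {n : ℕ} {z c : ℝ} (hpos : ∀ w : Fin n → E, 0 < (μ (cylW w)).toReal)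
    (happrox : ∀ w : Fin n → E, ∀ ω ∈ cylW w,
      |Real.log (μ (cylW w)).toReal - (z + birk φ n ω)| ≤ c) :
    |z + logPartition φ n| ≤ c + 2 * ∑ j ∈ Finset.range n, variation φ j := by
  have h := abs_log_sum_sub_log_sum_le (x := fun w : Fin n → E => (μ (cylW w)).toReal)
    (y := fun w => Real.exp z * cylWeight φ w) hpos
    (fun w => mul_pos (Real.exp_pos _) (cylWeight_pos hφ (cylW_nonempty w).choose_spec))
    fun w => by
      obtain ⟨ω, hω⟩ := cylW_nonempty w
      rw [Real.log_mul (Real.exp_pos _).ne' (cylWeight_pos hφ hω).ne', Real.log_exp]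
      calc _ = |(Real.log (μ (cylW w)).toReal - (z + birk φ n ω))
            - (Real.log (cylWeight φ w) - birk φ n ω)| := by ring_nf
        _ ≤ _ := (abs_sub _ _).trans
            (add_le_add (happrox w ω hω) (abs_log_cylWeight_sub_birk_le hφ hω))
  rwa [sum_toReal_measure_cylW, Real.log_one, ← Finset.mul_sum,
    Real.log_mul (Real.exp_pos _).ne' (sum_cylWeight_pos hφ n).ne', Real.log_exp, zero_sub,
    abs_neg] at h

lemma weakBowenGibbs_press_of_log_measure_cylW_approx (hφ : Continuous φ)
    {μ : Measure (Conf E)} [IsProbabilityMeasure μ] (z c : ℕ → ℝ)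
    (hc : Tendsto (fun n : ℕ => c n / n) atTop (𝓝 0))
    (hpos : ∀ n (w : Fin n → E), 0 < (μ (cylW w)).toReal)
    (happrox : ∀ n (w : Fin n → E), ∀ ω ∈ cylW w,
      |Real.log (μ (cylW w)).toReal - (z n + birk φ n ω)| ≤ c n) :
    WeakBowenGibbs μ φ (press φ) := by
  set V : ℕ → ℝ := fun n => 2 * ∑ j ∈ Finset.range n, variation φ j with hV
  refine weakBowenGibbs_iff.2
    ⟨fun n => 2 * c n + V n + |logPartition φ n - n * press φ|, ?_, fun n ω => ?_⟩
  · have hL : Tendsto (fun n : ℕ => |logPartition φ n / n - press φ|) atTop (𝓝 0) := by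
      simpa using ((tendsto_logPartition_div hφ).sub_const (press φ)).abs
    have hlim := ((hc.const_mul 2).add ((tendsto_sum_variation_div hφ).const_mul 2)).add hL
    simp only [mul_zero, add_zero] at hlim
    refine hlim.congr' ?_
    filter_upwards [eventually_ne_atTop 0] with n hn
    have hn' : (0 : ℝ) < n := by positivity
    rw [show logPartition φ n / n - press φ = (logPartition φ n - n * press φ) / n by
      field_simp, abs_div, abs_of_pos hn', hV]
    ring
  · rw [cylPt_eq_cylW]
    refine ⟨hpos n _, ?_⟩
    calc _ = |(Real.log (μ (cylW (wordOf n ω))).toReal - (z n + birk φ n ω))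
          + (z n + logPartition φ n) + (n * press φ - logPartition φ n)| := by ring_nf
      _ ≤ c n + (c n + V n) + |logPartition φ n - n * press φ| :=
        (abs_add_three _ _ _).trans (add_le_add (add_le_add
          (happrox n _ ω (mem_cylW_wordOf n ω))
          (abs_add_logPartition_le hφ (hpos n) (happrox n)))
          (abs_sub_comm _ _).le)
      _ = _ := by ring

lemma tendsto_apply_succ_div {u : ℕ → ℝ} {L : ℝ}
    (h : Tendsto (fun m : ℕ => u m / m) atTop (𝓝 L)) :
    Tendsto (fun n : ℕ => u (n + 1) / n) atTop (𝓝 L) := by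
  have hnum : Tendsto (fun n : ℕ => u (n + 1) / ((n : ℝ) + 1)) atTop (𝓝 L) :=
    (h.comp (tendsto_add_atTop_nat 1)).congr fun n => by simp
  have := hnum.div (tendsto_natCast_div_add_atTop (1 : ℝ)) one_ne_zero
  rw [div_one] at this
  exact this.congr fun n => div_div_div_cancel_right₀ (Nat.cast_add_one_ne_zero n) _ _

lemma abs_cylRelEntropy_sub_le (hφ : Continuous φ) {τ μ : Measure (Conf E)}
    [IsProbabilityMeasure τ] (hτ : ShiftInv τ) {P : ℝ} {K : ℕ → ℝ}
    (hbound : ∀ n ω, 0 < (μ (cylPt ω n)).toReal ∧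
      |Real.log (μ (cylPt ω n)).toReal - (birk φ n ω - n * P)| ≤ K n) (m : ℕ) :
    |cylRelEntropy τ μ m - (m * P - cylEntropy τ m - m * ∫ ω, φ ω ∂τ)| ≤ K m := by
  have hpos : ∀ w : Fin m → E, 0 < (μ (cylW w)).toReal := fun w => by
    obtain ⟨ω, hω⟩ := cylW_nonempty w
    have := (hbound m ω).1
    rwa [cylPt_eq_cylW, mem_cylW_iff_wordOf_eq.1 hω] at this
  have hsplit : cylRelEntropy τ μ m
      = -cylEntropy τ m - ∫ ω, Real.log (μ (cylW (wordOf m ω))).toReal ∂τ := by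
    rw [integral_comp_wordOf τ fun w => Real.log (μ (cylW w)).toReal, cylRelEntropy, cylEntropy,
      neg_neg,
      ← Finset.sum_sub_distrib]
    refine Finset.sum_congr rfl fun w _ => ?_
    rcases (ENNReal.toReal_nonneg (a := τ (cylW w))).eq_or_lt with h | h
    · rw [← h]
      simp
    · rw [Real.log_div h.ne' (hpos w).ne']
      ring
  have hbirk : ∫ ω, (birk φ m ω - m * P) ∂τ = m * ∫ ω, φ ω ∂τ - m * P := by
    rw [integral_sub (integrable_of_continuous (continuous_birk hφ m) τ) (integrable_const _),
      integral_birk hφ hτ, integral_const]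
    simp
  have hcross := norm_integral_le_of_norm_le_const (μ := τ) (C := K m)
    (f := fun ω => Real.log (μ (cylW (wordOf m ω))).toReal - (birk φ m ω - m * P))
    (Eventually.of_forall fun ω => by
      rw [Real.norm_eq_abs, ← cylPt_eq_cylW]
      exact (hbound m ω).2)
  rw [integral_sub (g := fun ω => birk φ m ω - m * P)
    (integrable_comp_wordOf τ fun w => Real.log (μ (cylW w)).toReal)
    (integrable_of_continuous ((continuous_birk hφ m).sub continuous_const) τ), hbirk] at hcross
  rw [hsplit]
  simp only [probReal_univ, mul_one, Real.norm_eq_abs] at hcross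
  rw [abs_le] at hcross ⊢
  constructor <;> linarith

lemma tendsto_relEntN_div_of_weakBowenGibbs (hφ : Continuous φ) {τ μ : Measure (Conf E)}
    [IsProbabilityMeasure τ] (hτ : ShiftInv τ) {P : ℝ} (hμ : WeakBowenGibbs μ φ P) :
    Tendsto (fun n : ℕ => relEntN τ μ n / n) atTop
      (𝓝 (P - ent τ - ∫ ω, φ ω ∂τ)) := by
  obtain ⟨K, hK, hbound⟩ := weakBowenGibbs_iff.1 hμ
  have hlim : Tendsto (fun m : ℕ => P - cylEntropy τ m / m - ∫ ω, φ ω ∂τ) atTop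
      (𝓝 (P - ent τ - ∫ ω, φ ω ∂τ)) :=
    ((tendsto_cylEntropy_div hτ).const_sub P).sub_const _
  -- `relEntN τ μ n` is `cylRelEntropy τ μ (n + 1)`: it lives on words of length `n + 1`.
  refine tendsto_apply_succ_div (u := cylRelEntropy τ μ) (hlim.congr_dist ?_)
  refine squeeze_zero' (Eventually.of_forall fun _ => dist_nonneg) ?_ hK
  filter_upwards [eventually_ne_atTop 0] with m hm
  have hm' : (0 : ℝ) < m := by positivity
  rw [Real.dist_eq, abs_sub_comm, show cylRelEntropy τ μ m / m
      - (P - cylEntropy τ m / m - ∫ ω, φ ω ∂τ)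
      = (cylRelEntropy τ μ m - (m * P - cylEntropy τ m - m * ∫ ω, φ ω ∂τ)) / m by field_simp,
    abs_div, abs_of_pos hm']
  exact div_le_div_of_nonneg_right (abs_cylRelEntropy_sub_le hφ hτ hbound m) hm'.le

end WeakBowenGibbs

section GibbsSpecification

variable {γ : Finset ℤ → Conf E → ℝ}

lemma gamma_pos (hnn : NonNull γ) (Λ : Finset ℤ) (ω : Conf E) : 0 < γ Λ ω :=
  let ⟨_, hc, h⟩ := hnn Λ
  hc.trans_le (h ω)

lemma phiOf_eq_sub (hnn : NonNull γ) (a : E) (ω : Conf E) :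
    phiOf γ a ω = Real.log (γ {0} (bca a ω (ω 0))) - Real.log (γ {0} (bca a ω a)) :=
  Real.log_div (gamma_pos hnn _ _).ne' (gamma_pos hnn _ _).ne'

lemma gamma_singleton_natCast (hTI : SpecTI γ) (j : ℕ) (ω : Conf E) :
    γ {(j : ℤ)} ω = γ {0} (shiftZ j ω) := by
  induction j generalizing ω with
  | zero => simp
  | succ j ih =>
    have himg : ({(j : ℤ)} : Finset ℤ).image (· + 1) = {((j + 1 : ℕ) : ℤ)} := by simp
    rw [← himg, hTI, ih, shiftZ_shiftZ, Nat.cast_succ]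

def replacePrefix (a : E) {n : ℕ} (w : Fin n → E) (j : ℕ) : Fin n → E :=
  fun i => if (i : ℕ) < j then a else w i

def wordOnIco {n : ℕ} (w : Fin n → E) : {k // k ∈ Finset.Ico (0 : ℤ) n} → E :=
  fun k => w ⟨(k : ℤ).toNat, by have := Finset.mem_Ico.1 k.2; omega⟩

lemma ovr_wordOnIco {n : ℕ} (w : Fin n → E) (η : Conf E) :
    ovr (Finset.Ico 0 n) (wordOnIco w) η = writeWord w η := by
  funext k
  simp only [ovr, writeWord, wordOnIco, Finset.mem_Ico]

lemma eq_wordOnIco_of_ovr_mem_cylW {n : ℕ} {w : Fin n → E}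
    {ξ : {k // k ∈ Finset.Ico (0 : ℤ) n} → E} {η : Conf E}
    (h : ovr (Finset.Ico 0 n) ξ η ∈ cylW w) : ξ = wordOnIco w := by
  funext k
  obtain ⟨h0, h1⟩ := Finset.mem_Ico.1 k.2
  have hk := h ⟨(k : ℤ).toNat, by omega⟩
  simp only [ovr, Int.toNat_of_nonneg h0, k.2, dite_true] at hk
  exact hk

variable [Fintype E]

lemma log_gamma_sub_eq_of_eq_off (hs : IsSpecification γ) (hnn : NonNull γ)
    {j : ℤ} {Λ : Finset ℤ} (hj : j ∈ Λ) {ω ω' : Conf E}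
    (h : ∀ k, k ≠ j → ω k = ω' k) :
    Real.log (γ Λ ω) - Real.log (γ Λ ω') = Real.log (γ {j} ω) - Real.log (γ {j} ω') := by
  have hsub : ({j} : Finset ℤ) ⊆ Λ := Finset.singleton_subset_iff.2 hj
  have hovr : ∀ η, ovr {j} η ω = ovr {j} η ω' := fun η => funext fun k => by
    unfold ovr
    split_ifs with hk
    · rfl
    · exact h k (by simpa using hk)
  have hω := hs.2.2 {j} Λ hsub ω
  have hω' := hs.2.2 {j} Λ hsub ω'
  simp_rw [hovr] at hω
  set T := ∑ η : {k // k ∈ ({j} : Finset ℤ)} → E, γ Λ (ovr {j} η ω')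
  have hT : T ≠ 0 := left_ne_zero_of_mul (hω ▸ (gamma_pos hnn Λ ω).ne')
  rw [hω, hω', Real.log_mul hT (gamma_pos hnn _ _).ne', Real.log_mul hT (gamma_pos hnn _ _).ne']
  ring

variable [TopologicalSpace E]

lemma continuous_log_gamma (hγ : IsGibbsSpec γ) (Λ : Finset ℤ) :
    Continuous fun ω => Real.log (γ Λ ω) :=
  (hγ.2.2 Λ).log fun ω => (gamma_pos hγ.2.1 Λ ω).ne'

lemma continuous_phiOf (hγ : IsGibbsSpec γ) (a : E) : Continuous (phiOf γ a) := by
  rw [show phiOf γ a = _ from funext (phiOf_eq_sub hγ.2.1 a)]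
  exact ((continuous_log_gamma hγ {0}).comp (continuous_bca a (continuous_apply 0))).sub
    ((continuous_log_gamma hγ {0}).comp (continuous_bca a continuous_const))

variable [DiscreteTopology E]

lemma abs_log_gamma_replacePrefix_sub_le (hγ : IsGibbsSpec γ) (hTI : SpecTI γ)
    (a : E) {n : ℕ} (w : Fin n → E) (η : Conf E) {j : ℕ} (hj : j < n) :
    |Real.log (γ (Finset.Ico 0 n) (writeWord (replacePrefix a w j) η))
      - Real.log (γ (Finset.Ico 0 n) (writeWord (replacePrefix a w (j + 1)) η))
      - phiOf γ a (shiftZ j (writeWord w η))|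
      ≤ 2 * variation (fun ω => Real.log (γ {0} ω)) j := by
  set ζ : ℕ → Conf E := fun i => writeWord (replacePrefix a w i) η with hζ
  set ψ := shiftZ j (writeWord w η) with hψ
  have hoff : ∀ k : ℤ, k ≠ j → ζ j k = ζ (j + 1) k := by
    intro k hk
    simp only [hζ, writeWord, replacePrefix]
    split_ifs <;> first | rfl | omega
  rw [log_gamma_sub_eq_of_eq_off hγ.1 hγ.2.1
    (Finset.mem_Ico.2 ⟨by positivity, by exact_mod_cast hj⟩) hoff, gamma_singleton_natCast hTI,
    gamma_singleton_natCast hTI, phiOf_eq_sub hγ.2.1]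
  -- On `[-j, j]`, `S^j ζ_j` and `S^j ζ_{j+1}` read `a` left of `0` and `ψ` right of `0`.
  have h1 : |Real.log (γ {0} (shiftZ j (ζ j))) - Real.log (γ {0} (bca a ψ (ψ 0)))|
      ≤ variation (fun ω => Real.log (γ {0} ω)) j := by
    refine abs_sub_le_variation (continuous_log_gamma hγ {0}) fun k hk => ?_
    rw [abs_le] at hk
    simp only [hψ, hζ, shiftZ_apply, bca, writeWord, replacePrefix]
    split_ifs <;> first | rfl | omega | exact congrArg w (Fin.ext (by simp only; omega))
  have h2 : |Real.log (γ {0} (shiftZ j (ζ (j + 1)))) - Real.log (γ {0} (bca a ψ a))|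
      ≤ variation (fun ω => Real.log (γ {0} ω)) j := by
    refine abs_sub_le_variation (continuous_log_gamma hγ {0}) fun k hk => ?_
    rw [abs_le] at hk
    simp only [hψ, hζ, shiftZ_apply, bca, writeWord, replacePrefix]
    split_ifs <;> first | rfl | omega
  calc _ = |(Real.log (γ {0} (shiftZ j (ζ j))) - Real.log (γ {0} (bca a ψ (ψ 0))))
        - (Real.log (γ {0} (shiftZ j (ζ (j + 1)))) - Real.log (γ {0} (bca a ψ a)))| := by
          ring_nf
    _ ≤ _ := (abs_sub _ _).trans (add_le_add h1 h2)
    _ = _ := by ring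

lemma abs_log_gamma_writeWord_sub_le (hγ : IsGibbsSpec γ) (hTI : SpecTI γ) (a : E) {n : ℕ}
    (w : Fin n → E) (η : Conf E) :
    |Real.log (γ (Finset.Ico 0 n) (writeWord w η))
      - Real.log (γ (Finset.Ico 0 n) (writeWord (fun _ : Fin n => a) η))
      - birk (phiOf γ a) n (writeWord w η)|
      ≤ 2 * ∑ j ∈ Finset.range n, variation (fun ω => Real.log (γ {0} ω)) j := by
  have htel := Finset.sum_range_sub'
    (fun j => Real.log (γ (Finset.Ico 0 n) (writeWord (replacePrefix a w j) η))) n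
  have h0 : replacePrefix a w 0 = w := funext fun i => if_neg (Nat.not_lt_zero _)
  have hn : replacePrefix a w n = fun _ => a := funext fun i => if_pos i.isLt
  simp only [h0, hn] at htel
  rw [← htel, birk, ← Finset.sum_sub_distrib, Finset.mul_sum]
  exact (Finset.abs_sum_le_sum_abs _ _).trans (Finset.sum_le_sum fun j hj =>
    abs_log_gamma_replacePrefix_sub_le hγ hTI a w η (Finset.mem_range.1 hj))

variable [MeasurableSpace E] [MeasurableSingletonClass E] {μ : Measure (Conf E)}

lemma toReal_measure_cylW_eq_integral (hμ : IsDLRGibbs γ μ) {n : ℕ} (w : Fin n → E) :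
    (μ (cylW w)).toReal = ∫ η, γ (Finset.Ico 0 n) (writeWord w η) ∂μ := by
  have hdlr := hμ.2 (Finset.Ico 0 n) ((cylW w).indicator 1)
    ((isClopen_cylW w).continuous_indicator continuous_one)
  rw [integral_indicator_one (measurableSet_cylW w), measureReal_def] at hdlr
  rw [← hdlr]
  refine integral_congr_ae (Eventually.of_forall fun η => ?_)
  dsimp only
  rw [Finset.sum_eq_single (wordOnIco w)]
  · simp [ovr_wordOnIco, writeWord_mem_cylW]
  · intro ξ _ hξ
    rw [Set.indicator_of_notMem fun h => hξ (eq_wordOnIco_of_ovr_mem_cylW h), mul_zero]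
  · simp

lemma abs_log_measure_cylW_sub_le (hγ : IsGibbsSpec γ) (hTI : SpecTI γ) (hμ : IsDLRGibbs γ μ)
    (a : E) {n : ℕ} (w : Fin n → E) {ω : Conf E} (hω : ω ∈ cylW w) :
    |Real.log (μ (cylW w)).toReal
      - (Real.log (∫ η, γ (Finset.Ico 0 n) (writeWord (fun _ : Fin n => a) η) ∂μ)
        + birk (phiOf γ a) n ω)|
      ≤ 2 * ∑ j ∈ Finset.range n, variation (fun ω => Real.log (γ {0} ω)) j
        + 2 * ∑ j ∈ Finset.range n, variation (phiOf γ a) j := by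
  have : IsProbabilityMeasure μ := hμ.1
  have hint : ∀ v : Fin n → E, Integrable (fun η => γ (Finset.Ico 0 n) (writeWord v η)) μ :=
    fun v => integrable_of_continuous ((hγ.2.2 _).comp (continuous_writeWord v)) μ
  have hZ := integral_pos_of_forall_pos (hint fun _ => a) fun η => gamma_pos hγ.2.1 _ _
  have h := abs_log_integral_sub_log_integral_le (hint w)
    ((hint fun _ => a).mul_const (Real.exp (birk (phiOf γ a) n ω)))
    (fun η => gamma_pos hγ.2.1 _ _) (fun η => mul_pos (gamma_pos hγ.2.1 _ _) (Real.exp_pos _))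
    fun η => by
      rw [Real.log_mul (gamma_pos hγ.2.1 _ _).ne' (Real.exp_pos _).ne', Real.log_exp]
      have h1 := abs_log_gamma_writeWord_sub_le hγ hTI a w η
      have h2 := abs_birk_sub_le (continuous_phiOf hγ a) (writeWord_mem_cylW w η) hω
      calc _ = |(Real.log (γ (Finset.Ico 0 n) (writeWord w η))
            - Real.log (γ (Finset.Ico 0 n) (writeWord (fun _ : Fin n => a) η))
            - birk (phiOf γ a) n (writeWord w η))
            + (birk (phiOf γ a) n (writeWord w η) - birk (phiOf γ a) n ω)| := by ring_nf
        _ ≤ _ := (abs_add_le _ _).trans (add_le_add h1 h2)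
  rwa [← toReal_measure_cylW_eq_integral hμ, integral_mul_const,
    Real.log_mul hZ.ne' (Real.exp_pos _).ne', Real.log_exp] at h

lemma weakBowenGibbs_of_isDLRGibbs [Nonempty E] (hγ : IsGibbsSpec γ) (hTI : SpecTI γ)
    (hμ : IsDLRGibbs γ μ) (a : E) : WeakBowenGibbs μ (phiOf γ a) (press (phiOf γ a)) := by
  have : IsProbabilityMeasure μ := hμ.1
  have hφ := continuous_phiOf hγ a
  refine weakBowenGibbs_press_of_log_measure_cylW_approx hφ _ _ ?_ (fun n w => ?_)
    fun n w ω hω => abs_log_measure_cylW_sub_le hγ hTI hμ a w hω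
  · have h := ((tendsto_sum_variation_div (continuous_log_gamma hγ {0})).const_mul 2).add
      ((tendsto_sum_variation_div hφ).const_mul 2)
    simp only [mul_zero, add_zero] at h
    exact h.congr fun n => by ring
  · rw [toReal_measure_cylW_eq_integral hμ]
    exact integral_pos_of_forall_pos
      (integrable_of_continuous ((hγ.2.2 _).comp (continuous_writeWord w)) μ)
      fun η => gamma_pos hγ.2.1 _ _

end GibbsSpecification

theorem specific_relative_entropy_formula_general [Fintype E] [Nonempty E] [TopologicalSpace E] [DiscreteTopology E]
    [MeasurableSpace E] [MeasurableSingletonClass E]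
    (γ : Finset ℤ → Conf E → ℝ) (hγ : IsGibbsSpec γ) (hTI : SpecTI γ) (a : E)
    (μ : Measure (Conf E)) (hμ : IsDLRGibbs γ μ)
    (τ : Measure (Conf E)) (hτp : IsProbabilityMeasure τ) (hτi : ShiftInv τ) :
    Tendsto (fun n : ℕ => relEntN τ μ n / n) atTop
      (𝓝 (press (phiOf γ a) - ent τ - ∫ ω, phiOf γ a ω ∂τ)) :=
  tendsto_relEntN_div_of_weakBowenGibbs (continuous_phiOf hγ a) hτi
    (weakBowenGibbs_of_isDLRGibbs hγ hTI hμ a)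

/-- For `μ ∈ G_S(γ)` and any shift-invariant Borel probability measure
`τ`, the specific relative entropy `h(τ|μ) = lim_n (1/n) H_n(τ|μ)` exists and equals
`P(φ_γ) - h(τ) - ∫ φ_γ dτ`. -/
theorem specific_relative_entropy_formula [Fintype E] [Nonempty E] [TopologicalSpace E] [DiscreteTopology E]
    [MeasurableSpace E] [MeasurableSingletonClass E]
    (γ : Finset ℤ → Conf E → ℝ) (hγ : IsGibbsSpec γ) (hTI : SpecTI γ) (a : E)
    (μ : Measure (Conf E)) (hμ : IsDLRGibbs γ μ) (hinv : ShiftInv μ)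
    (τ : Measure (Conf E)) (hτp : IsProbabilityMeasure τ) (hτi : ShiftInv τ) :
    Tendsto (fun n : ℕ => relEntN τ μ n / n) atTop
      (𝓝 (press (phiOf γ a) - ent τ - ∫ ω, phiOf γ a ω ∂τ)) :=
  specific_relative_entropy_formula_general γ hγ hTI a μ hμ τ hτp hτi

end GP
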